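/- For every odd prime p and every positive integer r, the first group cohomology H¹(SL₂(ℤ/p^r), (ℤ/p^r)²) of the tautological module vanishes. -/

import Mathlib

set_option synthInstance.maxHeartbeats 1000000
open Matrix

instance slSMul (n : ℕ) : SMul (SpecialLinearGroup (Fin 2) (ZMod n)) (Fin 2 → ZMod n) :=
  ⟨fun g v => (g : Matrix (Fin 2) (Fin 2) (ZMod n)).mulVec v⟩

lemma slAct_def {n : ℕ} (g : SpecialLinearGroup (Fin 2) (ZMod n)) (v : Fin 2 → ZMod n) :
    g • v = (g : Matrix (Fin 2) (Fin 2) (ZMod n)).mulVec v := rfl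

/-- The tautological action of `SL₂(ℤ/n)` on `(ℤ/n)²`. -/
instance slAct (n : ℕ) : DistribMulAction (SpecialLinearGroup (Fin 2) (ZMod n)) (Fin 2 → ZMod n) where
  one_smul v := by rw [slAct_def]; simp
  mul_smul g h v := by rw [slAct_def, slAct_def, slAct_def]; exact (Matrix.mulVec_mulVec _ _ _).symm
  smul_zero g := Matrix.mulVec_zero _
  smul_add g x y := Matrix.mulVec_add _ x y

/-- A 1-cocycle of a group `G` with values in a `G`-module `M`. -/
def IsCocycle {G M : Type*} [Group G] [AddCommGroup M] [DistribMulAction G M]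
    (f : G → M) : Prop :=
  ∀ g h : G, f (g * h) = f g + g • f h

/-- A 1-coboundary of a group `G` with values in a `G`-module `M`.  A cohomology class in
`H¹(G, M)` is zero precisely when a representing cocycle is a coboundary. -/
def IsCoboundary {G M : Type*} [Group G] [AddCommGroup M] [DistribMulAction G M]
    (f : G → M) : Prop :=
  ∃ m : M, ∀ g : G, f g = g • m - m

/-!
A central element `z` of `G` on which `z - 1` acts invertibly kills `H¹(G, M)`: evaluating a
cocycle `f` on `g z = z g` gives `(z - 1) f(g) = (g - 1) f(z)`, so writing `f(z) = (z - 1) m`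
and cancelling `z - 1` (which commutes with `g`) yields `f(g) = (g - 1) m`.
For `SL₂(ℤ/p^r)` take `z = -1`, which acts as `-2`, a unit because `p` is odd.
-/

theorem IsCocycle.isCoboundary_of_mem_center {G M : Type*} [Group G] [AddCommGroup M]
    [DistribMulAction G M] {f : G → M} (hf : IsCocycle f) {z : G} (hz : z ∈ Subgroup.center G)
    (hbij : Function.Bijective fun v : M => z • v - v) : IsCoboundary f := by
  obtain ⟨m, hm⟩ := hbij.2 (f z)
  refine ⟨m, fun g => hbij.1 ?_⟩
  have hfz : f g + g • f z = f z + z • f g := by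
    rw [← hf, ← hf, Subgroup.mem_center_iff.1 hz g]
  have hgz : g • z • m = z • g • m := by rw [smul_smul, smul_smul, Subgroup.mem_center_iff.1 hz g]
  simp only at hm ⊢
  rw [← hm, smul_sub, hgz] at hfz
  rw [smul_sub]
  linear_combination (norm := abel) -hfz

lemma SpecialLinearGroup.neg_one_smul {n : ℕ} (v : Fin 2 → ZMod n) :
    (-1 : SpecialLinearGroup (Fin 2) (ZMod n)) • v = -v := by
  rw [slAct_def, SpecialLinearGroup.coe_neg, neg_mulVec]
  exact congrArg Neg.neg (one_mulVec v)

lemma isUnit_two_zmod_pow {p : ℕ} (hp : Odd p) (r : ℕ) : IsUnit (2 : ZMod (p ^ r)) := by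
  exact_mod_cast (ZMod.isUnit_iff_coprime 2 (p ^ r)).2 ((Nat.coprime_two_left.2 hp).pow_right r)

open Matrix in
theorem stmt_4_general (p : ℕ) (hp : p.Prime) (hodd : p ≠ 2) (r : ℕ)
    (f : SpecialLinearGroup (Fin 2) (ZMod (p ^ r)) → (Fin 2 → ZMod (p ^ r)))
    (hf : IsCocycle f) : IsCoboundary f := by
  refine hf.isCoboundary_of_mem_center (z := -1) (Subgroup.mem_center_iff.2 fun g => by simp) ?_
  have hunit : IsUnit (-2 : ZMod (p ^ r)) := (isUnit_two_zmod_pow (hp.odd_of_ne_two hodd) r).neg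
  convert hunit.smul_bijective (β := Fin 2 → ZMod (p ^ r)) using 2 with v
  rw [SpecialLinearGroup.neg_one_smul]
  module

open Matrix in
/-- for an odd prime `p` and `r ≥ 1`, `H¹(SL₂(ℤ/p^r), (ℤ/p^r)²) = 0`:
every 1-cocycle of `SL₂(ℤ/p^r)` with values in the tautological module is a coboundary. -/
theorem stmt_4 (p : ℕ) (hp : p.Prime) (hodd : p ≠ 2) (r : ℕ) (hr : 0 < r)
    (f : SpecialLinearGroup (Fin 2) (ZMod (p ^ r)) → (Fin 2 → ZMod (p ^ r)))
    (hf : IsCocycle f) : IsCoboundary f :=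
  stmt_4_general p hp hodd r f hf
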